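/- Let f : M → M be a C¹ map of a compact Riemannian manifold M with Lebesgue (volume) measure Leb, eventually volume expanding with constant λ > 0, and let h(x) = min{n > 0 : |det Df^n(x)| ≥ e^{λn}}, Γ_n = {x : h(x) ≥ n}. If there exist constants C > 0 and α > 2 such that Leb(Γ_n) ≤ C·n^{−α} for every n ≥ 1, then there exists β > 0 such that for Lebesgue almost every x ∈ M there is C_x > 0 with |det Df^n(y)| > C_x · n^{β} for every n ≥ 1 and every y ∈ f^{−n}(x). -/

import Mathlib

/-!
Cut a backward orbit `y, f y, …, f^n y = x` greedily at expansion times: what is left is a tail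
`z = f^j y ∈ Γ_{r+1}` with `r + j = n` and `e^{λ j} |det Df^r(z)| ≤ |det Df^n(y)|`. So if
`|det Df^n(y)| ≤ n^β`, then `x = f^r z` with `|det Df^r(z)| ≤ n^β e^{-λ j}`, and by the change of
variables inequality the set of such `x` has volume at most `n^β e^{-λ j} · C (r+1)^{-α}`. Summed
over the `n + 1` splittings this is `O(n^{β+1-α})`, summable for `β = (α - 2)/2`; by Borel–Cantelli
almost every `x` has `|det Df^n(y)| > n^β` on all of `f^{-n}(x)` for large `n`. For the finitely
many remaining `n`, almost every `x` is a regular value of `f^n` (Sard), so `|det Df^n|` has a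
positive minimum on the compact fibre `M ∩ f^{-n}(x)`.
-/

open MeasureTheory Set Filter Function Real ENNReal

/-- `|det Df^n(x)|`: the absolute value of the Jacobian determinant of the `n`-th
iterate of `f` at `x`. -/
noncomputable def absDetIter {d : ℕ}
    (f : EuclideanSpace ℝ (Fin d) → EuclideanSpace ℝ (Fin d)) (n : ℕ)
    (x : EuclideanSpace ℝ (Fin d)) : ℝ :=
  |(fderiv ℝ (f^[n]) x).det|

/-- `h(x) = min {n > 0 : |det Df^n(x)| ≥ e^{λ n}}`, with value `∞` if no such `n` exists. -/
noncomputable def firstExpTime {d : ℕ}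
    (f : EuclideanSpace ℝ (Fin d) → EuclideanSpace ℝ (Fin d)) (lam : ℝ)
    (x : EuclideanSpace ℝ (Fin d)) : ℕ∞ :=
  sInf {N : ℕ∞ | ∃ m : ℕ, (m : ℕ∞) = N ∧ 0 < m ∧ Real.exp (lam * m) ≤ absDetIter f m x}

/-- `Γ_n = {x ∈ M : h(x) ≥ n}`. -/
noncomputable def GammaSet {d : ℕ} (M : Set (EuclideanSpace ℝ (Fin d)))
    (f : EuclideanSpace ℝ (Fin d) → EuclideanSpace ℝ (Fin d)) (lam : ℝ) (n : ℕ) :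
    Set (EuclideanSpace ℝ (Fin d)) :=
  {x ∈ M | (n : ℕ∞) ≤ firstExpTime f lam x}

open Topology Finset.HasAntidiagonal

theorem ContDiff.iterate {𝕜 E : Type*} [NontriviallyNormedField 𝕜] [NormedAddCommGroup E]
    [NormedSpace 𝕜 E] {n : WithTop ℕ∞} {f : E → E} (hf : ContDiff 𝕜 n f) (k : ℕ) :
    ContDiff 𝕜 n f^[k] := by
  induction k with
  | zero => exact contDiff_id
  | succ k ih => rw [Function.iterate_succ']; exact hf.comp ih

theorem addHaar_image_le_mul_of_abs_det_le {E : Type*} [NormedAddCommGroup E]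
    [NormedSpace ℝ E] [FiniteDimensional ℝ E] [MeasurableSpace E] [BorelSpace E]
    (μ : Measure E) [μ.IsAddHaarMeasure] {g : E → E} {g' : E → E →L[ℝ] E} {s : Set E}
    (hs : MeasurableSet s) (hg' : ∀ x ∈ s, HasFDerivWithinAt g (g' x) s x) {T : ℝ}
    (hT : ∀ x ∈ s, |(g' x).det| ≤ T) :
    μ (g '' s) ≤ ENNReal.ofReal T * μ s :=
  calc μ (g '' s) ≤ ∫⁻ x in s, ENNReal.ofReal |(g' x).det| ∂μ :=
        addHaar_image_le_lintegral_abs_det_fderiv μ hs hg'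
    _ ≤ ∫⁻ _ in s, ENNReal.ofReal T ∂μ :=
        setLIntegral_mono measurable_const fun x hx => ENNReal.ofReal_le_ofReal (hT x hx)
    _ = ENNReal.ofReal T * μ s := setLIntegral_const s _

theorem ae_eventually_notMem_of_summable {α : Type*} [MeasurableSpace α] {μ : Measure α}
    {s : ℕ → Set α} {u : ℕ → ℝ} (hs : ∀ n, μ (s n) ≤ ENNReal.ofReal (u n)) (hu : Summable u) :
    ∀ᵐ x ∂μ, ∀ᶠ n in atTop, x ∉ s n :=
  ae_eventually_notMem (ne_top_of_le_ne_top hu.tsum_ofReal_ne_top (ENNReal.tsum_le_tsum hs))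

theorem exists_pos_forall_of_eventually {p : ℕ → ℝ → Prop}
    (hanti : ∀ n ⦃c c'⦄, c' ≤ c → p n c → p n c') (hpos : ∀ n, ∃ c > 0, p n c)
    (hev : ∀ᶠ n in atTop, p n 1) : ∃ c > 0, ∀ n, p n c := by
  obtain ⟨N, hN⟩ := eventually_atTop.1 hev
  have hsmall : ∀ n, ∀ᶠ c in 𝓝[>] (0 : ℝ), p n c := fun n => by
    obtain ⟨c, hc, hpc⟩ := hpos n
    filter_upwards [Ioo_mem_nhdsGT hc] with c' hc' using hanti n hc'.2.le hpc
  obtain ⟨c, hcN, hc⟩ := (((Set.finite_lt_nat N).eventually_all.2 fun n _ => hsmall n).and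
    (Ioo_mem_nhdsGT one_pos)).exists
  exact ⟨c, hc.1, fun n => (lt_or_ge n N).elim (hcN n) fun h => hanti n hc.2.le (hN n h)⟩

theorem exists_forall_rpow_mul_exp_neg_le (α : ℝ) {lam : ℝ} (hlam : 0 < lam) :
    ∃ D, ∀ j : ℕ, ((j : ℝ) + 1) ^ α * exp (-(lam * j)) ≤ D := by
  have hlim : Tendsto (fun j : ℕ => ((j : ℝ) + 1) ^ α * exp (-lam * ((j : ℝ) + 1)))
      atTop (𝓝 0) :=
    (tendsto_rpow_mul_exp_neg_mul_atTop_nhds_zero α lam hlam).comp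
      (tendsto_atTop_add_const_right atTop 1 tendsto_natCast_atTop_atTop)
  obtain ⟨D, hD⟩ := hlim.bddAbove_range
  refine ⟨exp lam * D, fun j => ?_⟩
  calc ((j : ℝ) + 1) ^ α * exp (-(lam * j))
      = exp lam * (((j : ℝ) + 1) ^ α * exp (-lam * ((j : ℝ) + 1))) := by
        rw [mul_left_comm, ← exp_add]; ring_nf
    _ ≤ exp lam * D := by gcongr; exact hD (mem_range_self j)

theorem rpow_mul_exp_neg_mul_rpow_neg_le {lam α β D : ℝ} (hα : 0 ≤ α) (hβ : 0 ≤ β)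
    (hD : ∀ j : ℕ, ((j : ℝ) + 1) ^ α * exp (-(lam * j)) ≤ D) (r j : ℕ) :
    ((r + j : ℕ) : ℝ) ^ β * exp (-(lam * j)) * ((r + 1 : ℕ) : ℝ) ^ (-α)
      ≤ D * (((r + j : ℕ) : ℝ) + 1) ^ (β - α) := by
  push_cast
  have hsubmul : (r + j + 1 : ℝ) ^ α ≤ (r + 1 : ℝ) ^ α * (j + 1 : ℝ) ^ α := by
    rw [← mul_rpow (by positivity) (by positivity)]
    gcongr
    nlinarith [(r.cast_nonneg : (0 : ℝ) ≤ r), (j.cast_nonneg : (0 : ℝ) ≤ j)]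
  rw [Real.rpow_neg (by positivity), Real.rpow_sub (by positivity), ← div_eq_mul_inv,
    mul_div_assoc', div_le_div_iff₀ (by positivity) (by positivity)]
  calc (r + j : ℝ) ^ β * exp (-(lam * j)) * (r + j + 1 : ℝ) ^ α
      ≤ (r + j + 1 : ℝ) ^ β * exp (-(lam * j)) * ((r + 1 : ℝ) ^ α * (j + 1 : ℝ) ^ α) := by
        gcongr (?_ : ℝ) ^ β * _ * ?_
        linarith
    _ = (r + j + 1 : ℝ) ^ β * (r + 1 : ℝ) ^ α * ((j + 1 : ℝ) ^ α * exp (-(lam * j))) := by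
        ring
    _ ≤ (r + j + 1 : ℝ) ^ β * (r + 1 : ℝ) ^ α * D := by gcongr; exact hD j
    _ = D * (r + j + 1 : ℝ) ^ β * (r + 1 : ℝ) ^ α := by ring

section IteratedJacobian

variable {d : ℕ} {M : Set (EuclideanSpace ℝ (Fin d))}
  {f : EuclideanSpace ℝ (Fin d) → EuclideanSpace ℝ (Fin d)} {lam β : ℝ}

theorem absDetIter_add (hf : Differentiable ℝ f) (m n : ℕ) (x : EuclideanSpace ℝ (Fin d)) :
    absDetIter f (m + n) x = absDetIter f m (f^[n] x) * absDetIter f n x := by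
  rw [absDetIter, iterate_add, fderiv_comp x (hf.iterate m _) (hf.iterate n x),
    ContinuousLinearMap.det, ContinuousLinearMap.toLinearMap_comp, LinearMap.det_comp, abs_mul]
  rfl

theorem continuous_absDetIter (hf : ContDiff ℝ 1 f) (n : ℕ) : Continuous (absDetIter f n) :=
  (ContinuousLinearMap.continuous_det.comp
    ((hf.iterate n).continuous_fderiv one_ne_zero)).abs

theorem mem_gammaSet_iff {n : ℕ} {x : EuclideanSpace ℝ (Fin d)} :
    x ∈ GammaSet M f lam n ↔
      x ∈ M ∧ ∀ m : ℕ, 0 < m → m < n → absDetIter f m x < exp (lam * m) := by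
  simp only [GammaSet, firstExpTime, mem_ofPred_eq, le_sInf_iff]
  refine and_congr_right fun _ => ⟨fun h m hm hmn => ?_, fun h => ?_⟩
  · by_contra! hle
    exact absurd (Nat.cast_le.1 (h _ ⟨m, rfl, hm, hle⟩)) (not_le.2 hmn)
  · rintro _ ⟨m, rfl, hm, hle⟩
    by_contra! hlt
    exact (h m hm (by exact_mod_cast hlt)).not_ge hle

theorem measurableSet_gammaSet (hM : IsClosed M) (hf : ContDiff ℝ 1 f) (n : ℕ) :
    MeasurableSet (GammaSet M f lam n) := by
  have h : GammaSet M f lam n =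
      M ∩ ⋂ (m : ℕ) (_ : 0 < m) (_ : m < n), {x | absDetIter f m x < exp (lam * m)} := by
    ext x
    simp [mem_gammaSet_iff]
  rw [h]
  exact hM.measurableSet.inter <| .iInter fun m => .iInter fun _ => .iInter fun _ =>
    (isOpen_lt (continuous_absDetIter hf m) continuous_const).measurableSet

theorem exists_split_mem_gammaSet (hf : Differentiable ℝ f) (hfM : MapsTo f M M) (n : ℕ) :
    ∀ y ∈ M, ∃ r j : ℕ, r + j = n ∧ f^[j] y ∈ GammaSet M f lam (r + 1) ∧
      exp (lam * j) * absDetIter f r (f^[j] y) ≤ absDetIter f n y := by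
  induction n using Nat.strong_induction_on with
  | _ n ih =>
  intro y hy
  by_cases hΓ : y ∈ GammaSet M f lam (n + 1)
  · exact ⟨n, 0, rfl, hΓ, by simp⟩
  obtain ⟨m, hm, hmn, hexp⟩ : ∃ m, 0 < m ∧ m < n + 1 ∧ exp (lam * m) ≤ absDetIter f m y := by
    simpa [mem_gammaSet_iff, hy] using hΓ
  obtain ⟨k, rfl⟩ : ∃ k, n = k + m := ⟨n - m, by omega⟩
  obtain ⟨r, j, rfl, hz, hle⟩ := ih k (by omega) (f^[m] y) (hfM.iterate m hy)
  refine ⟨r, j + m, by omega, by rwa [iterate_add_apply], ?_⟩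
  rw [absDetIter_add hf, iterate_add_apply]
  calc exp (lam * ↑(j + m)) * absDetIter f r (f^[j] (f^[m] y))
      = exp (lam * j) * absDetIter f r (f^[j] (f^[m] y)) * exp (lam * m) := by
        push_cast; rw [mul_add, exp_add]; ring
    _ ≤ absDetIter f (r + j) (f^[m] y) * absDetIter f m y :=
        mul_le_mul hle hexp (exp_pos _).le (abs_nonneg _)

def slowPreimageCover (M : Set (EuclideanSpace ℝ (Fin d)))
    (f : EuclideanSpace ℝ (Fin d) → EuclideanSpace ℝ (Fin d)) (lam β : ℝ) (n : ℕ) :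
    Set (EuclideanSpace ℝ (Fin d)) :=
  ⋃ p ∈ antidiagonal n, f^[p.1] '' (GammaSet M f lam (p.1 + 1) ∩
    {z | exp (lam * p.2) * absDetIter f p.1 z ≤ (n : ℝ) ^ β})

theorem mem_slowPreimageCover (hf : Differentiable ℝ f) (hfM : MapsTo f M M) {n : ℕ}
    {x y : EuclideanSpace ℝ (Fin d)} (hy : y ∈ M) (hyx : f^[n] y = x)
    (hdet : absDetIter f n y ≤ (n : ℝ) ^ β) : x ∈ slowPreimageCover M f lam β n := by
  obtain ⟨r, j, hrj, hz, hle⟩ := exists_split_mem_gammaSet (lam := lam) hf hfM n y hy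
  refine mem_iUnion₂.2 ⟨(r, j), mem_antidiagonal.2 hrj, f^[j] y, ⟨hz, hle.trans hdet⟩, ?_⟩
  rw [← iterate_add_apply, hrj, hyx]

theorem volume_slowPreimageCover_le (hM : IsClosed M) (hf : ContDiff ℝ 1 f) {C α D : ℝ}
    (hC : 0 ≤ C) (hα : 0 ≤ α) (hβ : 0 ≤ β)
    (hGamma : ∀ n : ℕ, 1 ≤ n →
      volume (GammaSet M f lam n) ≤ ENNReal.ofReal (C * (n : ℝ) ^ (-α)))
    (hD : ∀ j : ℕ, ((j : ℝ) + 1) ^ α * exp (-(lam * j)) ≤ D) (n : ℕ) :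
    volume (slowPreimageCover M f lam β n)
      ≤ ENNReal.ofReal (C * D * ((n : ℝ) + 1) ^ (β + 1 - α)) := by
  have hpiece : ∀ p ∈ antidiagonal n, volume (f^[p.1] '' (GammaSet M f lam (p.1 + 1) ∩
      {z | exp (lam * p.2) * absDetIter f p.1 z ≤ (n : ℝ) ^ β}))
        ≤ ENNReal.ofReal (C * D * ((n : ℝ) + 1) ^ (β - α)) := by
    rintro ⟨r, j⟩ hrj
    obtain rfl : r + j = n := mem_antidiagonal.1 hrj
    set s := GammaSet M f lam (r + 1) ∩
      {z | exp (lam * j) * absDetIter f r z ≤ ((r + j : ℕ) : ℝ) ^ β}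
    have hs : MeasurableSet s := (measurableSet_gammaSet hM hf _).inter
      (measurableSet_le ((continuous_absDetIter hf r).measurable.const_mul _) measurable_const)
    have hJ : ∀ z ∈ s, absDetIter f r z ≤ ((r + j : ℕ) : ℝ) ^ β * exp (-(lam * j)) := by
      intro z hz
      rw [exp_neg, ← div_eq_mul_inv, le_div_iff₀' (exp_pos _)]
      exact hz.2
    calc volume (f^[r] '' s)
        ≤ ENNReal.ofReal (((r + j : ℕ) : ℝ) ^ β * exp (-(lam * j))) * volume s :=
          addHaar_image_le_mul_of_abs_det_le volume hs
            (fun z _ => ((hf.differentiable one_ne_zero).iterate r z).hasFDerivAt.hasFDerivWithinAt)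
            hJ
      _ ≤ ENNReal.ofReal (((r + j : ℕ) : ℝ) ^ β * exp (-(lam * j)))
            * ENNReal.ofReal (C * ((r + 1 : ℕ) : ℝ) ^ (-α)) := by
          gcongr
          exact (measure_mono inter_subset_left).trans (hGamma _ (Nat.le_add_left 1 r))
      _ = ENNReal.ofReal (((r + j : ℕ) : ℝ) ^ β * exp (-(lam * j))
            * (C * ((r + 1 : ℕ) : ℝ) ^ (-α))) := (ENNReal.ofReal_mul (by positivity)).symm
      _ ≤ ENNReal.ofReal (C * D * (((r + j : ℕ) : ℝ) + 1) ^ (β - α)) := by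
          refine ENNReal.ofReal_le_ofReal ?_
          rw [mul_left_comm, mul_assoc C D]
          exact mul_le_mul_of_nonneg_left (rpow_mul_exp_neg_mul_rpow_neg_le hα hβ hD r j) hC
  calc volume (slowPreimageCover M f lam β n)
      ≤ ∑ p ∈ antidiagonal n, ENNReal.ofReal (C * D * ((n : ℝ) + 1) ^ (β - α)) :=
        (measure_biUnion_finset_le _ _).trans (Finset.sum_le_sum hpiece)
    _ = ENNReal.ofReal (C * D * ((n : ℝ) + 1) ^ (β + 1 - α)) := by
        rw [Finset.sum_const, Finset.Nat.card_antidiagonal, nsmul_eq_mul, ← ENNReal.ofReal_natCast,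
          ← ENNReal.ofReal_mul (by positivity), add_sub_right_comm,
          Real.rpow_add_one (by positivity)]
        push_cast
        ring_nf

theorem ae_forall_absDetIter_pos (hf : Differentiable ℝ f) :
    ∀ᵐ x ∂(volume : Measure (EuclideanSpace ℝ (Fin d))),
      ∀ (n : ℕ) (y : EuclideanSpace ℝ (Fin d)), f^[n] y = x → 0 < absDetIter f n y := by
  have hcrit : ∀ n, volume (f^[n] '' {y | (fderiv ℝ f^[n] y).det = 0}) = 0 := fun n =>
    addHaar_image_eq_zero_of_det_fderivWithin_eq_zero volume
      (fun y _ => (hf.iterate n y).hasFDerivAt.hasFDerivWithinAt) fun _ hy => hy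
  filter_upwards [measure_eq_zero_iff_ae_notMem.1 (measure_iUnion_null hcrit)] with x hx n y hyx
  exact abs_pos.2 fun hy => hx (mem_iUnion.2 ⟨n, y, hy, hyx⟩)

theorem exists_pos_forall_mem_fibre_le_absDetIter (hM : IsCompact M) (hf : ContDiff ℝ 1 f)
    {x : EuclideanSpace ℝ (Fin d)} (n : ℕ)
    (hreg : ∀ y : EuclideanSpace ℝ (Fin d), f^[n] y = x → 0 < absDetIter f n y) :
    ∃ c > 0, ∀ y ∈ M, f^[n] y = x → c ≤ absDetIter f n y := by
  have hfibre : IsCompact (M ∩ f^[n] ⁻¹' {x}) :=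
    hM.inter_right (isClosed_singleton.preimage (hf.iterate n).continuous)
  obtain ⟨c, hc, hcK⟩ := hfibre.exists_forall_le' (continuous_absDetIter hf n).continuousOn
    fun y hy => hreg y hy.2
  exact ⟨c, hc, fun y hy hyx => hcK y ⟨hy, hyx⟩⟩

theorem exists_pos_forall_mul_rpow_lt_absDetIter (hM : IsCompact M) (hf : ContDiff ℝ 1 f)
    (hfM : MapsTo f M M) {x : EuclideanSpace ℝ (Fin d)}
    (hreg : ∀ (n : ℕ) (y : EuclideanSpace ℝ (Fin d)), f^[n] y = x → 0 < absDetIter f n y)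
    (hslow : ∀ᶠ n in atTop, x ∉ slowPreimageCover M f lam β n) :
    ∃ Cx : ℝ, 0 < Cx ∧ ∀ n : ℕ, 1 ≤ n → ∀ y ∈ M, f^[n] y = x →
      Cx * (n : ℝ) ^ β < absDetIter f n y := by
  have hsmall (n : ℕ) : ∃ c > 0, 1 ≤ n → ∀ y ∈ M, f^[n] y = x →
      c * (n : ℝ) ^ β ≤ absDetIter f n y := by
    rcases Nat.eq_zero_or_pos n with rfl | hn
    · exact ⟨1, one_pos, fun h => absurd h (by omega)⟩
    obtain ⟨c, hc, hcn⟩ := exists_pos_forall_mem_fibre_le_absDetIter hM hf n (hreg n)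
    refine ⟨c / (n : ℝ) ^ β, by positivity, fun _ y hy hyx => ?_⟩
    rw [div_mul_cancel₀ _ (by positivity)]
    exact hcn y hy hyx
  have hlarge : ∀ᶠ n in atTop, 1 ≤ n → ∀ y ∈ M, f^[n] y = x →
      1 * (n : ℝ) ^ β ≤ absDetIter f n y := by
    filter_upwards [hslow] with n hn _ y hy hyx
    rw [one_mul]
    by_contra! hlt
    exact hn (mem_slowPreimageCover (hf.differentiable one_ne_zero) hfM hy hyx hlt.le)
  obtain ⟨c, hc, hcn⟩ := exists_pos_forall_of_eventually
    (fun n c c' hc' hpc hn y hy hyx =>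
      (mul_le_mul_of_nonneg_right hc' (by positivity)).trans (hpc hn y hy hyx))
    hsmall hlarge
  refine ⟨c / 2, half_pos hc, fun n hn y hy hyx => ?_⟩
  calc c / 2 * (n : ℝ) ^ β < c * (n : ℝ) ^ β := by gcongr; exact half_lt_self hc
    _ ≤ absDetIter f n y := hcn n hn y hy hyx

end IteratedJacobian

theorem backward_contraction_polynomial_general {d : ℕ}
    (M : Set (EuclideanSpace ℝ (Fin d))) (hM : IsCompact M)
    (f : EuclideanSpace ℝ (Fin d) → EuclideanSpace ℝ (Fin d))
    (hf : ContDiff ℝ 1 f) (hfM : MapsTo f M M)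
    (lam : ℝ) (hlam : 0 < lam)
    (C α : ℝ) (hC : 0 < C) (hα : 2 < α)
    (hGamma : ∀ n : ℕ, 1 ≤ n →
      volume (GammaSet M f lam n) ≤ ENNReal.ofReal (C * (n : ℝ) ^ (-α))) :
    ∃ β : ℝ, 0 < β ∧ ∀ᵐ x ∂(volume.restrict M), ∃ Cx : ℝ, 0 < Cx ∧
      ∀ n : ℕ, 1 ≤ n → ∀ y ∈ M, f^[n] y = x →
        Cx * (n : ℝ) ^ β < absDetIter f n y := by
  set β := (α - 2) / 2 with hβ_def
  have hβ : 0 < β := by linarith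
  obtain ⟨D, hD⟩ := exists_forall_rpow_mul_exp_neg_le α hlam
  have hsum : Summable fun n : ℕ => C * D * ((n : ℝ) + 1) ^ (β + 1 - α) := by
    have hexp : β + 1 - α < -1 := by linarith
    refine .mul_left _ ?_
    exact_mod_cast (summable_nat_add_iff 1).2 (Real.summable_nat_rpow.2 hexp)
  have hslow := ae_eventually_notMem_of_summable (volume_slowPreimageCover_le hM.isClosed hf
    hC.le (by linarith) hβ.le hGamma hD) hsum
  refine ⟨β, hβ, ae_restrict_of_ae ?_⟩
  filter_upwards [hslow, ae_forall_absDetIter_pos (hf.differentiable one_ne_zero)]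
    with x hx hreg
  exact exists_pos_forall_mul_rpow_lt_absDetIter hM hf hfM hreg hx

/-- Polynomial case: if `Leb (Γ_n) ≤ C n^{-α}` with `α > 2` then one gets backward
contraction at a polynomial rate `n^β`. -/
theorem backward_contraction_polynomial {d : ℕ}
    (M : Set (EuclideanSpace ℝ (Fin d))) (hM : IsCompact M)
    (f : EuclideanSpace ℝ (Fin d) → EuclideanSpace ℝ (Fin d))
    (hf : ContDiff ℝ 1 f) (hfM : MapsTo f M M)
    (lam : ℝ) (hlam : 0 < lam)
    (h_expanding : ∀ᵐ x ∂(volume.restrict M),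
      ∃ n : ℕ, 1 ≤ n ∧ lam < (1 / n) * Real.log (absDetIter f n x))
    (C α : ℝ) (hC : 0 < C) (hα : 2 < α)
    (hGamma : ∀ n : ℕ, 1 ≤ n →
      volume (GammaSet M f lam n) ≤ ENNReal.ofReal (C * (n : ℝ) ^ (-α))) :
    ∃ β : ℝ, 0 < β ∧ ∀ᵐ x ∂(volume.restrict M), ∃ Cx : ℝ, 0 < Cx ∧
      ∀ n : ℕ, 1 ≤ n → ∀ y ∈ M, f^[n] y = x →
        Cx * (n : ℝ) ^ β < absDetIter f n y :=
  backward_contraction_polynomial_general M hM f hf hfM lam hlam C α hC hα hGamma
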